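/- arXiv:math/9411207 — 2 statements merged into one kernel-verified Lean document; each statement's English description precedes it below -/
import Mathlib

section
/- For every natural number n and every a < 2^n: if the period of a doubles from A_n to A_{n+1}, say p_n(a) = 2^k and p_{n+1}(a) = 2^{k+1}, then a *_{n+1} 2^k = 2^n in A_{n+1}. -/
open Fin.NatCast

/-- The unique left self-distributive operation on `Fin (2^m)` with `a * 1 = a + 1`. -/
def IsCyclicLD (m : ℕ) (op : Fin (2^m) → Fin (2^m) → Fin (2^m)) : Prop :=
  (∀ a b c, op a (op b c) = op (op a b) (op a c)) ∧ ∀ a, op a 1 = a + 1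

/-- The period `p_m(a)`: the least positive `p` with `a * (p mod 2^m) = 0`. -/
noncomputable def period (m : ℕ) (op : Fin (2^m) → Fin (2^m) → Fin (2^m))
    (a : Fin (2^m)) : ℕ :=
  sInf {p : ℕ | 0 < p ∧ op a ((p : ℕ) : Fin (2^m)) = 0}

/-!
Reduction mod `2^n` is a homomorphism `A_{n+1} → A_n`, so `a *_{n+1} 2^k` reduces to
`a *_n 2^k = 0` and hence is `0` or `2^n`; it is not `0` because `2^k` is below the period
`2^{k+1}` of `a` in `A_{n+1}`. The homomorphism property, like the fact that `a * b > a` unless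
`a * b = 0`, follows from `a * (b + 1) = (a * b) * (a + 1)` by descending induction on `a`.
-/

namespace Fin

variable {N : ℕ} [NeZero N]

theorem exists_eq_natCast_add_one (b : Fin N) : ∃ t : ℕ, b = t + 1 :=
  ⟨(b - 1).val, by rw [cast_val_eq_self, sub_add_cancel]⟩

theorem add_one_eq_zero_or_lt (a : Fin N) : a + 1 = 0 ∨ a < a + 1 := by
  rw [← cast_val_eq_self a, ← Nat.cast_add_one, lt_def, val_natCast, val_natCast,
    Nat.mod_eq_of_lt a.isLt, natCast_eq_zero]
  rcases Nat.lt_or_ge (a.val + 1) N with h | h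
  · right; rw [Nat.mod_eq_of_lt h]; omega
  · left; rw [show a.val + 1 = N by omega]

variable {M : ℕ} [NeZero M]

theorem natCast_val_natCast (h : N ∣ M) (t : ℕ) : (((t : Fin M).val : ℕ) : Fin N) = t := by
  ext
  rw [val_natCast, val_natCast, val_natCast, Nat.mod_mod_of_dvd t h]

theorem natCast_val_add_one (h : N ∣ M) (x : Fin M) :
    (((x + 1).val : ℕ) : Fin N) = (x.val : Fin N) + 1 := by
  conv_lhs => rw [← cast_val_eq_self x, ← Nat.cast_succ, natCast_val_natCast h, Nat.cast_succ]

theorem eq_two_pow_of_natCast_val_eq_zero {n : ℕ} {x : Fin (2 ^ (n + 1))} (hx : x ≠ 0)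
    (h : (x.val : Fin (2 ^ n)) = 0) : x = (2 ^ n : ℕ) := by
  obtain ⟨q, hq⟩ := natCast_eq_zero.mp h
  have hlt : 2 ^ n * q < 2 ^ n * 2 := by rw [← hq, ← pow_succ]; exact x.isLt
  have hq0 : q ≠ 0 := by rintro rfl; exact hx (Fin.ext (by rw [hq, mul_zero, val_zero]))
  have hq1 : q = 1 := by have := lt_of_mul_lt_mul_left hlt; omega
  ext
  rw [hq, hq1, mul_one, val_natCast, Nat.mod_eq_of_lt (Nat.pow_lt_pow_succ one_lt_two)]

end Fin

structure IsLaverOp {N : ℕ} [NeZero N] (op : Fin N → Fin N → Fin N) : Prop where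
  self_distrib : ∀ a b c, op a (op b c) = op (op a b) (op a c)
  op_one : ∀ a, op a 1 = a + 1

theorem IsCyclicLD.isLaverOp {m : ℕ} {op : Fin (2 ^ m) → Fin (2 ^ m) → Fin (2 ^ m)}
    (h : IsCyclicLD m op) : IsLaverOp op :=
  ⟨h.1, h.2⟩

namespace IsLaverOp

variable {N : ℕ} [NeZero N] {op : Fin N → Fin N → Fin N} (hop : IsLaverOp op)
include hop

theorem op_add_one (a b : Fin N) : op a (b + 1) = op (op a b) (a + 1) := by
  rw [← hop.op_one b, hop.self_distrib, hop.op_one]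

theorem zero_op (b : Fin N) : op 0 b = b := by
  obtain ⟨t, rfl⟩ := b.exists_eq_natCast_add_one
  induction t with
  | zero => rw [Nat.cast_zero, zero_add, hop.op_one, zero_add]
  | succ t ih => rw [Nat.cast_succ, hop.op_add_one, ih, zero_add, hop.op_one]

theorem eq_zero_or_lt (a b : Fin N) : op a b = 0 ∨ a < op a b := by
  induction a using WellFoundedGT.induction generalizing b with | _ a ih => ?_
  obtain ⟨t, rfl⟩ := b.exists_eq_natCast_add_one
  induction t with
  | zero => rw [Nat.cast_zero, zero_add, hop.op_one]; exact a.add_one_eq_zero_or_lt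
  | succ t iht =>
    rw [Nat.cast_succ, hop.op_add_one]
    rcases iht with h | h
    · rw [h, hop.zero_op]; exact a.add_one_eq_zero_or_lt
    · exact (ih _ h (a + 1)).imp_right h.trans

theorem natCast_val_op {K : ℕ} [NeZero K] (hKN : K ∣ N) {op₀ : Fin K → Fin K → Fin K}
    (hop₀ : IsLaverOp op₀) (a b : Fin N) :
    ((op a b).val : Fin K) = op₀ (a.val : Fin K) (b.val : Fin K) := by
  induction a using WellFoundedGT.induction generalizing b with | _ a ih => ?_
  obtain ⟨t, rfl⟩ := b.exists_eq_natCast_add_one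
  induction t with
  | zero =>
    rw [Fin.natCast_val_add_one hKN, Nat.cast_zero, Fin.val_zero, Nat.cast_zero, zero_add,
      zero_add, hop.op_one, hop₀.op_one, Fin.natCast_val_add_one hKN]
  | succ t iht =>
    rw [Nat.cast_succ, hop.op_add_one, Fin.natCast_val_add_one hKN, hop₀.op_add_one, ← iht]
    rcases hop.eq_zero_or_lt a (t + 1) with h | h
    · rw [h, hop.zero_op, Fin.val_zero, Nat.cast_zero, hop₀.zero_op, Fin.natCast_val_add_one hKN]
    · rw [ih _ h, Fin.natCast_val_add_one hKN]

end IsLaverOp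

section Period

variable {m : ℕ} {op : Fin (2 ^ m) → Fin (2 ^ m) → Fin (2 ^ m)} {a : Fin (2 ^ m)}

theorem op_period_eq_zero (h : period m op a ≠ 0) : op a (period m op a) = 0 :=
  (Nat.sInf_mem (Nat.nonempty_of_pos_sInf (Nat.pos_of_ne_zero h))).2

theorem op_ne_zero_of_lt_period {p : ℕ} (hp : 0 < p) (h : p < period m op a) : op a p ≠ 0 :=
  fun hzero => Nat.notMem_of_lt_sInf h ⟨hp, hzero⟩

end Period

theorem period_doubles_hits_pow_general (n : ℕ) (a : ℕ) (k : ℕ)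
    (op₀ : Fin (2^n) → Fin (2^n) → Fin (2^n)) (hop₀ : IsCyclicLD n op₀)
    (op₁ : Fin (2^(n+1)) → Fin (2^(n+1)) → Fin (2^(n+1))) (hop₁ : IsCyclicLD (n+1) op₁)
    (hk : period n op₀ ((a : ℕ) : Fin (2^n)) = 2^k)
    (hdouble : period (n+1) op₁ ((a : ℕ) : Fin (2^(n+1))) = 2^(k+1)) :
    op₁ ((a : ℕ) : Fin (2^(n+1))) ((2^k : ℕ) : Fin (2^(n+1))) = ((2^n : ℕ) : Fin (2^(n+1))) := by
  have hdvd : 2 ^ n ∣ 2 ^ (n + 1) := pow_dvd_pow 2 n.le_succ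
  have hzero : op₀ a (2 ^ k : ℕ) = 0 := hk ▸ op_period_eq_zero (hk ▸ (pow_pos two_pos k).ne')
  have hne : op₁ a (2 ^ k : ℕ) ≠ 0 :=
    op_ne_zero_of_lt_period (pow_pos two_pos k) (hdouble ▸ Nat.pow_lt_pow_succ one_lt_two)
  apply Fin.eq_two_pow_of_natCast_val_eq_zero hne
  rw [hop₁.isLaverOp.natCast_val_op hdvd hop₀.isLaverOp, Fin.natCast_val_natCast hdvd,
    Fin.natCast_val_natCast hdvd, hzero]

/-- if the period of `a < 2^n` doubles from `A_n` to `A_{n+1}`, say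
`p_n(a) = 2^k` and `p_{n+1}(a) = 2^{k+1}`, then `a *_{n+1} 2^k = 2^n` in `A_{n+1}`. -/
theorem period_doubles_hits_pow (n : ℕ) (a : ℕ) (ha : a < 2^n) (k : ℕ)
    (op₀ : Fin (2^n) → Fin (2^n) → Fin (2^n)) (hop₀ : IsCyclicLD n op₀)
    (op₁ : Fin (2^(n+1)) → Fin (2^(n+1)) → Fin (2^(n+1))) (hop₁ : IsCyclicLD (n+1) op₁)
    (hk : period n op₀ ((a : ℕ) : Fin (2^n)) = 2^k)
    (hdouble : period (n+1) op₁ ((a : ℕ) : Fin (2^(n+1))) = 2^(k+1)) :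
    op₁ ((a : ℕ) : Fin (2^(n+1))) ((2^k : ℕ) : Fin (2^(n+1))) = ((2^n : ℕ) : Fin (2^(n+1))) :=
  period_doubles_hits_pow_general n a k op₀ hop₀ op₁ hop₁ hk hdouble
end

section
/- For every natural number n and every a with 1 ≤ a ≤ 2^n, in the cyclic left-distributive algebra A_{n+2} one has 2^n *_{n+2} a = 2^n + a. -/
open Fin.NatCast

/-!
Read the elements of `A_N` as `1, …, 2^N`, with `0` standing for `2^N`. Then `x * y > x`,
so the row `k ↦ x * k` starts at `x + 1`, increases strictly until it reaches `2^N`, and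
is periodic from there; its period is a power of two of size at most `2^N - x`. Reduction
modulo `2^(N-1)` is a homomorphism `A_N → A_(N-1)` (both `x * (y + 2^(N-1))` and
`(x + 2^(N-1)) * y` are congruent to `x * y`).

For `x = 2^n + b` with `0 < b < 2^n` in `A_(n+2)`, the image of `x` in `A_(n+1)` has period
below `2^n`, so `x * 2^(n-1)` and `x * 2^n` are both `0` or `2^(n+1)`. If `x * 2^n` were
`2^(n+1)`, the period of `x` would exceed `2^n`, the row would increase strictly from
`2^(n-1)` to `2^n` and so could not sit at `2^(n+1)` at both ends. Hence `x * 2^n = 0`, and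
`2^n * (b + 1) = (2^n + b) * (2^n + 1) = (x * 2^n) * (x + 1) = x + 1` by induction on `b`.
-/

theorem Fin.induction_add_one {n : ℕ} [NeZero n] {P : Fin n → Prop} (one : P 1)
    (succ : ∀ y, P y → P (y + 1)) (y : Fin n) : P y := by
  have key : ∀ k : ℕ, P ((k + 1 : ℕ) : Fin n) := by
    intro k
    induction k with
    | zero => simpa using one
    | succ k ih => simpa using succ _ ih
  have hy : ((y.val + (n - 1) + 1 : ℕ) : Fin n) = y := by
    rw [show y.val + (n - 1) + 1 = y.val + n by have := NeZero.pos n; omega]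
    simp
  exact hy ▸ key _

theorem Fin.val_add_one_of_ne_zero {n : ℕ} [NeZero n] {x : Fin n} (hx : x + 1 ≠ 0) :
    (x + 1).val = x.val + 1 := by
  obtain ⟨k, rfl⟩ := Nat.exists_eq_succ_of_ne_zero (NeZero.ne n)
  rw [Fin.val_add_one, if_neg]
  rintro rfl
  exact hx (Fin.last_add_one k)

theorem Nat.dvd_two_pow_of_lt {d k j : ℕ} (hd : d ∣ 2^k) (hlt : d < 2^(j+1)) : d ∣ 2^j := by
  obtain ⟨i, -, rfl⟩ := (Nat.dvd_prime_pow Nat.prime_two).1 hd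
  exact pow_dvd_pow 2 (Nat.lt_succ_iff.1 ((Nat.pow_lt_pow_iff_right (by norm_num)).1 hlt))

section LaverVal

variable {m : ℕ}

/-- The representative of `z` in Laver's range `{1, …, 2^m}`: `0` stands for `2^m`. -/
def laverVal (z : Fin (2^m)) : ℕ := if z = 0 then 2^m else z.val

theorem laverVal_of_ne_zero {z : Fin (2^m)} (hz : z ≠ 0) : laverVal z = z.val := if_neg hz

theorem val_le_laverVal (z : Fin (2^m)) : z.val ≤ laverVal z := by
  unfold laverVal; split_ifs with h <;> simp [h]

theorem laverVal_le (z : Fin (2^m)) : laverVal z ≤ 2^m := by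
  unfold laverVal; split_ifs <;> omega

theorem val_lt_laverVal_add_one (x : Fin (2^m)) : x.val < laverVal (x + 1) := by
  by_cases hx : x + 1 = 0
  · simp [laverVal, hx]
  · rw [laverVal_of_ne_zero hx, Fin.val_add_one_of_ne_zero hx]; omega

/-- The row `k ↦ x * k` is the orbit of `0` under `z ↦ z * (x + 1)`. -/
noncomputable def rowPeriod (op : Fin (2^m) → Fin (2^m) → Fin (2^m)) (x : Fin (2^m)) : ℕ :=
  Function.minimalPeriod (fun z => op z (x + 1)) 0

end LaverVal

section Projection

variable {m : ℕ}

def laverProj : Fin (2^(m+1)) →+ Fin (2^m) :=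
  AddMonoidHom.mk' (fun z => (z.val : Fin (2^m))) fun u v => by
    ext
    simp [Fin.val_add, Fin.val_natCast, Nat.mod_mod_of_dvd _ (pow_dvd_pow 2 m.le_succ)]

theorem laverProj_natCast (k : ℕ) : laverProj (k : Fin (2^(m+1))) = (k : Fin (2^m)) := by
  ext
  simp [laverProj, Fin.val_natCast, Nat.mod_mod_of_dvd _ (pow_dvd_pow 2 m.le_succ)]

theorem laverProj_natCast_val (u : Fin (2^m)) : laverProj (u.val : Fin (2^(m+1))) = u := by
  rw [laverProj_natCast, Fin.cast_val_eq_self]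

theorem laverProj_surjective : Function.Surjective (laverProj (m := m)) :=
  fun u => ⟨u.val, laverProj_natCast_val u⟩

theorem laverProj_one : laverProj (1 : Fin (2^(m+1))) = 1 := by
  simpa using laverProj_natCast (m := m) 1

theorem laverProj_two_pow : laverProj ((2^m : ℕ) : Fin (2^(m+1))) = 0 := by
  rw [laverProj_natCast, Fin.natCast_self]

theorem val_two_pow : ((2^m : ℕ) : Fin (2^(m+1))).val = 2^m :=
  Nat.mod_eq_of_lt (Nat.pow_lt_pow_right (by norm_num) m.lt_succ_self)

theorem two_pow_add_two_pow : ((2^m : ℕ) : Fin (2^(m+1))) + (2^m : ℕ) = 0 := by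
  rw [← Nat.cast_add, ← two_mul, ← pow_succ', Fin.natCast_self]

theorem laverProj_eq_zero_iff {z : Fin (2^(m+1))} :
    laverProj z = 0 ↔ z = 0 ∨ z = (2^m : ℕ) := by
  refine ⟨fun h => ?_, ?_⟩
  · obtain ⟨c, hc⟩ := Fin.natCast_eq_zero.1 h
    have hc2 : c < 2 := by
      have := z.isLt
      rw [hc, pow_succ] at this
      exact Nat.lt_of_mul_lt_mul_left this
    interval_cases c
    · exact .inl (Fin.ext (by simpa using hc))
    · refine .inr (Fin.ext ?_)
      rw [hc, val_two_pow, mul_one]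
  · rintro (rfl | rfl)
    exacts [map_zero _, laverProj_two_pow]

theorem eq_or_eq_add_of_laverProj_eq {u v : Fin (2^(m+1))} (h : laverProj u = laverProj v) :
    v = u ∨ v = u + (2^m : ℕ) := by
  have : laverProj (v - u) = 0 := by rw [map_sub, h, sub_self]
  rcases laverProj_eq_zero_iff.1 this with h0 | h0
  · exact .inl (sub_eq_zero.1 h0)
  · exact .inr (sub_eq_iff_eq_add'.1 h0)

theorem val_add_two_pow_of_lt {x : Fin (2^(m+1))} (hx : x.val < 2^m) :
    (x + (2^m : ℕ)).val = x.val + 2^m := by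
  have h2 : 2^(m+1) = 2^m * 2 := pow_succ 2 m
  rw [Fin.val_add, val_two_pow, Nat.mod_eq_of_lt (by omega)]

theorem val_add_two_pow_lt_of_le {x : Fin (2^(m+1))} (hx : 2^m ≤ x.val) :
    (x + (2^m : ℕ)).val < 2^m := by
  have h2 : 2^(m+1) = 2^m * 2 := pow_succ 2 m
  have := x.isLt
  rw [Fin.val_add, val_two_pow, Nat.mod_eq_sub_mod (by omega), Nat.mod_eq_of_lt (by omega)]
  omega

def projOp (op : Fin (2^(m+1)) → Fin (2^(m+1)) → Fin (2^(m+1))) (u v : Fin (2^m)) :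
    Fin (2^m) :=
  laverProj (op u.val v.val)

end Projection

namespace IsCyclicLD

section Rows

variable {m : ℕ} {op : Fin (2^m) → Fin (2^m) → Fin (2^m)}

theorem op_add_one (hop : IsCyclicLD m op) (x y : Fin (2^m)) :
    op x (y + 1) = op (op x y) (x + 1) := by
  simpa only [hop.2] using hop.1 x y 1

theorem zero_op (hop : IsCyclicLD m op) (y : Fin (2^m)) : op 0 y = y := by
  induction y using Fin.induction_add_one with
  | one => simpa using hop.2 0
  | succ y ih => rw [hop.op_add_one, ih, zero_add, hop.2]

theorem val_lt_laverVal_op (hop : IsCyclicLD m op) (x y : Fin (2^m)) :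
    x.val < laverVal (op x y) := by
  induction x using WellFoundedGT.induction generalizing y with
  | _ x IH =>
  induction y using Fin.induction_add_one with
  | one => rw [hop.2]; exact val_lt_laverVal_add_one x
  | succ y ih =>
    rw [hop.op_add_one]
    by_cases ha : op x y = 0
    · rw [ha, hop.zero_op]; exact val_lt_laverVal_add_one x
    · rw [laverVal_of_ne_zero ha] at ih
      exact ih.trans (IH _ (Fin.lt_def.2 ih) _)

theorem eq_zero_or_val_lt_op (hop : IsCyclicLD m op) (x y : Fin (2^m)) :
    op x y = 0 ∨ x.val < (op x y).val := by
  have := hop.val_lt_laverVal_op x y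
  unfold laverVal at this
  split_ifs at this with h
  exacts [.inl h, .inr this]

theorem op_zero (hop : IsCyclicLD m op) (x : Fin (2^m)) : op x 0 = 0 := by
  by_contra h
  have hidem : op (op x 0) (op x 0) = op x 0 := by
    simpa only [hop.zero_op] using (hop.1 x 0 0).symm
  have := hop.val_lt_laverVal_op (op x 0) (op x 0)
  rw [hidem, laverVal_of_ne_zero h] at this
  exact this.false

theorem op_natCast_eq_iterate (hop : IsCyclicLD m op) (x : Fin (2^m)) (k : ℕ) :
    op x k = (fun z => op z (x + 1))^[k] 0 := by
  induction k with
  | zero => simpa using hop.op_zero x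
  | succ k ih => rw [Function.iterate_succ_apply', ← ih, Nat.cast_succ, hop.op_add_one]

theorem op_natCast_eq_zero_iff (hop : IsCyclicLD m op) (x : Fin (2^m)) (k : ℕ) :
    op x k = 0 ↔ rowPeriod op x ∣ k := by
  rw [hop.op_natCast_eq_iterate, rowPeriod, ← Function.isPeriodicPt_iff_minimalPeriod_dvd]
  rfl

theorem rowPeriod_dvd (hop : IsCyclicLD m op) (x : Fin (2^m)) : rowPeriod op x ∣ 2^m :=
  (hop.op_natCast_eq_zero_iff x _).1 (by rw [Fin.natCast_self, hop.op_zero])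

theorem op_add_natCast_of_dvd (hop : IsCyclicLD m op) {x : Fin (2^m)} {k : ℕ}
    (hk : rowPeriod op x ∣ k) (y : Fin (2^m)) : op x (y + k) = op x y := by
  have hper : Function.IsPeriodicPt (fun z => op z (x + 1)) k 0 :=
    Function.isPeriodicPt_iff_minimalPeriod_dvd.2 hk
  rw [← Fin.cast_val_eq_self y, ← Nat.cast_add, hop.op_natCast_eq_iterate,
    hop.op_natCast_eq_iterate, Function.iterate_add_apply, hper.eq]

theorem laverVal_op_lt_succ (hop : IsCyclicLD m op) {x : Fin (2^m)} {k : ℕ}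
    (hk : op x k ≠ 0) : laverVal (op x k) < laverVal (op x (k + 1 : ℕ)) := by
  rw [laverVal_of_ne_zero hk, Nat.cast_succ, hop.op_add_one]
  exact hop.val_lt_laverVal_op _ _

theorem laverVal_op_add_le (hop : IsCyclicLD m op) (x : Fin (2^m)) (j t : ℕ)
    (hne : ∀ i, j ≤ i → i < j + t → op x i ≠ 0) :
    laverVal (op x j) + t ≤ laverVal (op x (j + t : ℕ)) := by
  induction t with
  | zero => simp
  | succ t ih =>
    have := hop.laverVal_op_lt_succ (hne (j + t) (by omega) (by omega))
    have := ih fun i hi hit => hne i hi (by omega)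
    rw [← add_assoc j]
    omega

theorem rowPeriod_add_val_le (hop : IsCyclicLD m op) (x : Fin (2^m)) :
    rowPeriod op x + x.val ≤ 2^m := by
  have hpos : 0 < rowPeriod op x := Nat.pos_of_dvd_of_pos (hop.rowPeriod_dvd x) (by positivity)
  have hne : ∀ i, 1 ≤ i → i < 1 + (rowPeriod op x - 1) → op x i ≠ 0 := fun i hi hip h =>
    Nat.not_dvd_of_pos_of_lt hi (by omega) ((hop.op_natCast_eq_zero_iff x i).1 h)
  have hchain := hop.laverVal_op_add_le x 1 _ hne
  rw [Nat.cast_one, hop.2] at hchain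
  have := val_lt_laverVal_add_one x
  have := laverVal_le (op x (1 + (rowPeriod op x - 1) : ℕ))
  omega

end Rows

section Projection

variable {m : ℕ} {op : Fin (2^(m+1)) → Fin (2^(m+1)) → Fin (2^(m+1))}

theorem rowPeriod_dvd_two_pow (hop : IsCyclicLD (m+1) op) {x : Fin (2^(m+1))} (hx : x ≠ 0) :
    rowPeriod op x ∣ 2^m := by
  have hx0 : 0 < x.val := Fin.pos_iff_ne_zero.2 hx
  exact Nat.dvd_two_pow_of_lt (hop.rowPeriod_dvd x) (by have := hop.rowPeriod_add_val_le x; omega)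

theorem laverProj_op_add_two_pow (hop : IsCyclicLD (m+1) op) (x y : Fin (2^(m+1))) :
    laverProj (op x (y + (2^m : ℕ))) = laverProj (op x y) := by
  by_cases hx : x = 0
  · rw [hx, hop.zero_op, hop.zero_op, map_add, laverProj_two_pow, add_zero]
  · rw [hop.op_add_natCast_of_dvd (hop.rowPeriod_dvd_two_pow hx)]

theorem laverProj_op_two_pow (hop : IsCyclicLD (m+1) op) (z : Fin (2^(m+1))) :
    laverProj (op (2^m : ℕ) z) = laverProj z := by
  induction z using Fin.induction_add_one with
  | one => rw [hop.2, map_add, laverProj_two_pow, zero_add]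
  | succ z ih =>
    rw [hop.op_add_one, add_comm ((2^m : ℕ) : Fin (2^(m+1))) 1, hop.laverProj_op_add_two_pow,
      hop.2, map_add, ih, map_add]

theorem laverProj_op_add_two_pow_left_of_lt (hop : IsCyclicLD (m+1) op) (x : Fin (2^(m+1)))
    (hx : x.val < 2^m) (z : Fin (2^(m+1))) :
    laverProj (op (x + (2^m : ℕ)) z) = laverProj (op x z) := by
  induction x using WellFoundedGT.induction generalizing z with
  | _ x IH =>
  by_cases hx0 : x = 0
  · rw [hx0, zero_add, hop.zero_op, hop.laverProj_op_two_pow]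
  induction z using Fin.induction_add_one with
  | one => rw [hop.2, hop.2, map_add, map_add, map_add, laverProj_two_pow, add_zero]
  | succ z ih =>
    have hQ : ∀ w : Fin (2^(m+1)), w.val < 2^m → w = 0 ∨ x.val < w.val →
        laverProj (op (w + (2^m : ℕ)) (x + 1)) = laverProj (op w (x + 1)) := by
      rintro w hw (rfl | hxw)
      · rw [zero_add, hop.zero_op, hop.laverProj_op_two_pow]
      · exact IH w hxw hw _
    rw [hop.op_add_one x z, hop.op_add_one (x + _) z, add_right_comm,
      hop.laverProj_op_add_two_pow]
    rcases eq_or_eq_add_of_laverProj_eq ih.symm with hb | hb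
    · rw [hb]
    rw [hb]
    -- Rows increase, so whichever of `x * z`, `(x + 2^m) * z` lies below `2^m` is `0` or
    -- exceeds `x`: the induction hypothesis (or the case `x = 0`) applies to it.
    rcases Nat.lt_or_ge (op x z).val (2^m) with ha | ha
    · exact hQ _ ha (hop.eq_zero_or_val_lt_op x z)
    · have hQb := hQ _ (val_add_two_pow_lt_of_le ha) <| by
        rw [← hb]
        refine (hop.eq_zero_or_val_lt_op _ z).imp_right fun h => ?_
        rw [val_add_two_pow_of_lt hx] at h
        omega
      rwa [add_assoc, two_pow_add_two_pow, add_zero, eq_comm] at hQb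

theorem laverProj_op_add_two_pow_left (hop : IsCyclicLD (m+1) op) (x z : Fin (2^(m+1))) :
    laverProj (op (x + (2^m : ℕ)) z) = laverProj (op x z) := by
  by_cases hx : x.val < 2^m
  · exact hop.laverProj_op_add_two_pow_left_of_lt x hx z
  · have := hop.laverProj_op_add_two_pow_left_of_lt _ (val_add_two_pow_lt_of_le (not_lt.1 hx)) z
    rwa [add_assoc, two_pow_add_two_pow, add_zero, eq_comm] at this

theorem laverProj_op_congr (hop : IsCyclicLD (m+1) op) {u u' v v' : Fin (2^(m+1))}
    (hu : laverProj u = laverProj u') (hv : laverProj v = laverProj v') :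
    laverProj (op u v) = laverProj (op u' v') := by
  rcases eq_or_eq_add_of_laverProj_eq hu with rfl | rfl <;>
    rcases eq_or_eq_add_of_laverProj_eq hv with rfl | rfl
  · rfl
  · rw [hop.laverProj_op_add_two_pow]
  · rw [hop.laverProj_op_add_two_pow_left]
  · rw [hop.laverProj_op_add_two_pow, hop.laverProj_op_add_two_pow_left]

theorem laverProj_op (hop : IsCyclicLD (m+1) op) (u v : Fin (2^(m+1))) :
    laverProj (op u v) = projOp op (laverProj u) (laverProj v) :=
  hop.laverProj_op_congr (laverProj_natCast_val _).symm (laverProj_natCast_val _).symm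

theorem projOp_isCyclicLD (hop : IsCyclicLD (m+1) op) : IsCyclicLD m (projOp op) := by
  refine ⟨fun a b c => ?_, fun a => ?_⟩
  · obtain ⟨a, rfl⟩ := laverProj_surjective a
    obtain ⟨b, rfl⟩ := laverProj_surjective b
    obtain ⟨c, rfl⟩ := laverProj_surjective c
    rw [← hop.laverProj_op b c, ← hop.laverProj_op a, hop.1, hop.laverProj_op (op a b),
      hop.laverProj_op a b, hop.laverProj_op a c]
  · obtain ⟨a, rfl⟩ := laverProj_surjective a
    rw [← laverProj_one, ← hop.laverProj_op, hop.2, map_add]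

end Projection

theorem op_two_pow_add_two_pow_eq_zero {n s : ℕ}
    {op : Fin (2^(n+2)) → Fin (2^(n+2)) → Fin (2^(n+2))} (hop : IsCyclicLD (n+2) op)
    (hs : 0 < s) (hsn : s < 2^n) :
    op ((2^n + s : ℕ) : Fin (2^(n+2))) ((2^n : ℕ) : Fin (2^(n+2))) = 0 := by
  obtain ⟨k, rfl⟩ : ∃ k, n = k + 1 := ⟨n - 1, by cases n <;> simp_all⟩
  set x : Fin (2^(k+1+2)) := ((2^(k+1) + s : ℕ) : Fin (2^(k+1+2)))
  have hpow : 2^(k+2) = 2^(k+1) * 2 := pow_succ 2 (k+1)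
  have hperiod : rowPeriod (projOp op) (laverProj x) ∣ 2^k := by
    have hxval : (laverProj x).val = 2^(k+1) + s := by
      rw [laverProj_natCast, Fin.val_natCast, Nat.mod_eq_of_lt (by omega)]
    have hle := hop.projOp_isCyclicLD.rowPeriod_add_val_le (laverProj x)
    rw [hxval] at hle
    exact Nat.dvd_two_pow_of_lt (hop.projOp_isCyclicLD.rowPeriod_dvd _) (by omega)
  have hproj : ∀ j : ℕ, 2^k ∣ j →
      op x j = 0 ∨ op x j = ((2^(k+2) : ℕ) : Fin (2^(k+1+2))) := by
    intro j hj
    refine laverProj_eq_zero_iff.1 ?_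
    rw [hop.laverProj_op, laverProj_natCast j,
      hop.projOp_isCyclicLD.op_natCast_eq_zero_iff]
    exact hperiod.trans hj
  by_contra hne
  have hnz : ∀ i : ℕ, 0 < i → i ≤ 2^(k+1) → op x i ≠ 0 := fun i hi hik h =>
    hne <| (hop.op_natCast_eq_zero_iff x _).2 <| Nat.dvd_two_pow_of_lt (hop.rowPeriod_dvd x) <|
      (Nat.le_of_dvd hi ((hop.op_natCast_eq_zero_iff x i).1 h)).trans_lt (by omega)
  have hfirst := (hproj (2^k) dvd_rfl).resolve_left (hnz _ (by positivity) (by omega))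
  have hchain := hop.laverVal_op_add_le x (2^k) (2^k) fun i hi hik => hnz i (by omega) (by omega)
  have hlow : 2^(k+2) ≤ laverVal (op x (2^k : ℕ)) := by
    rw [hfirst]
    exact (val_two_pow (m := k+2)).symm.le.trans (val_le_laverVal _)
  have hhigh : laverVal (op x (2^k + 2^k : ℕ)) = 2^(k+2) := by
    rw [← two_mul, ← pow_succ', laverVal_of_ne_zero hne,
      (hproj _ (pow_dvd_pow 2 k.le_succ)).resolve_left hne]
    exact val_two_pow (m := k+2)
  have : (0 : ℕ) < 2^k := by positivity
  omega

end IsCyclicLD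

/-- in `A_{n+2}`, `2^n *_{n+2} a = 2^n + a` for all `1 ≤ a ≤ 2^n`. -/
theorem pow_mul_small (n : ℕ) (a : ℕ) (ha1 : 1 ≤ a) (ha2 : a ≤ 2^n)
    (op : Fin (2^(n+2)) → Fin (2^(n+2)) → Fin (2^(n+2))) (hop : IsCyclicLD (n+2) op) :
    op ((2^n : ℕ) : Fin (2^(n+2))) ((a : ℕ) : Fin (2^(n+2))) =
      ((2^n + a : ℕ) : Fin (2^(n+2))) := by
  induction a, ha1 using Nat.le_induction with
  | base => rw [Nat.cast_one, hop.2, Nat.cast_add, Nat.cast_one]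
  | succ b hb ih =>
    rw [Nat.cast_succ b, hop.op_add_one, ih (by omega), hop.op_add_one,
      hop.op_two_pow_add_two_pow_eq_zero (by omega) (by omega), hop.zero_op, ← add_assoc,
      Nat.cast_succ]
end
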